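/- Let α = (I^g, α^g)_{g∈mor(𝒢)} be a partial action of a groupoid 𝒢 on an R-semicategory C such that _xI^e_x contains an identity element for all x ∈ C₀ and e ∈ 𝒢₀. If (C,α) admits a globalization (D, β, (φ_e)_{e∈𝒢₀}), then for every g ∈ mor(𝒢) and every x ∈ C₀ the R-module _xI^g_x contains a local identity element. -/

import Mathlib

open scoped Classical

noncomputable section

universe u u₂ v v' w w'

/-- A one-sorted (algebraic) groupoid: a set `G` of morphisms with a
partially defined multiplication (`comp g h` meaning `d g = r h`), a total
extension `mul` of it, and inversion. -/
structure AlgGroupoid (G : Type u₂) where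
  mul : G → G → G
  inv : G → G
  comp : G → G → Prop
  comp_iff : ∀ g h, comp g h ↔ mul (inv g) g = mul h (inv h)
  mul_assoc' : ∀ g h k, comp g h → comp h k → mul (mul g h) k = mul g (mul h k)
  comp_mul_left : ∀ g h k, comp g h → comp h k → comp (mul g h) k
  comp_mul_right : ∀ g h k, comp g h → comp h k → comp g (mul h k)
  inv_inv' : ∀ g, inv (inv g) = g
  comp_inv_left : ∀ g, comp (inv g) g
  comp_inv_right : ∀ g, comp g (inv g)
  inv_mul_cancel' : ∀ g h, comp g h → mul (inv g) (mul g h) = h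
  mul_inv_cancel' : ∀ g h, comp g h → mul (mul g h) (inv h) = g
  inv_mul' : ∀ g h, comp g h → inv (mul g h) = mul (inv h) (inv g)

namespace AlgGroupoid

variable {G : Type u₂}

/-- The domain identity `d g = g⁻¹ g`. -/
def d (𝒢 : AlgGroupoid G) (g : G) : G := 𝒢.mul (𝒢.inv g) g

/-- The range identity `r g = g g⁻¹`. -/
def r (𝒢 : AlgGroupoid G) (g : G) : G := 𝒢.mul g (𝒢.inv g)

/-- The set of identities `𝒢₀` of the groupoid. -/
def units (𝒢 : AlgGroupoid G) : Set G := {e | ∃ g, e = 𝒢.d g}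

/-- A partial action of a groupoid `𝒢` on the subset `X` of the type `Y`:
the data is a family of domains `D g ⊆ X` and a (total extension of a)
family of maps `act g : D g⁻¹ → D g`. -/
def IsPartialActionOn {Y : Type v} (𝒢 : AlgGroupoid G)
    (X : Set Y) (D : G → Set Y) (act : G → Y → Y) : Prop :=
  (∀ g, D g ⊆ X) ∧
  (∀ g, D g ⊆ D (𝒢.r g)) ∧
  (∀ x ∈ X, ∃ e ∈ 𝒢.units, x ∈ D e) ∧
  (∀ e ∈ 𝒢.units, ∀ x ∈ D e, act e x = x) ∧
  (∀ g, ∀ x ∈ D (𝒢.inv g), act g x ∈ D g) ∧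
  (∀ g, ∀ x ∈ D (𝒢.inv g), act (𝒢.inv g) (act g x) = x) ∧
  (∀ g h, 𝒢.comp g h → act g '' (D (𝒢.inv g) ∩ D h) = D g ∩ D (𝒢.mul g h)) ∧
  (∀ g h, 𝒢.comp g h → ∀ x ∈ D (𝒢.inv h),
      act h x ∈ D (𝒢.inv g) ∩ D h → act g (act h x) = act (𝒢.mul g h) x)

/-- A partial action of a groupoid on (all of) a set `Y`. -/
def IsSetPartialAction {Y : Type v} (𝒢 : AlgGroupoid G)
    (D : G → Set Y) (act : G → Y → Y) : Prop :=
  𝒢.IsPartialActionOn Set.univ D act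

/-- A partial set action is global when `α_g ∘ α_h = α_{gh}` (as partially
defined maps) for every composable pair `(g, h)`. -/
def SetActionIsGlobal {Y : Type v} (𝒢 : AlgGroupoid G)
    (D : G → Set Y) (act : G → Y → Y) : Prop :=
  ∀ g h, 𝒢.comp g h →
    D (𝒢.inv (𝒢.mul g h)) = {x ∈ D (𝒢.inv h) | act h x ∈ D (𝒢.inv g)} ∧
    ∀ x ∈ D (𝒢.inv (𝒢.mul g h)), act g (act h x) = act (𝒢.mul g h) x

end AlgGroupoid
/-- An `R`-semicategory with object type `Ob`: morphism `R`-modules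
`Hom y x` (the morphisms *from `x` to `y`*, i.e. `_yC_x`) and an
associative `R`-bilinear composition (no identities required). -/
structure RSemicat (R : Type u) [CommRing R] (Ob : Type v) : Type (max u v (w + 1)) where
  Hom : Ob → Ob → Type w
  [homAdd : ∀ y x, AddCommGroup (Hom y x)]
  [homMod : ∀ y x, Module R (Hom y x)]
  comp : ∀ {z y x : Ob}, Hom z y → Hom y x → Hom z x
  comp_assoc : ∀ {v z y x : Ob} (f : Hom v z) (g : Hom z y) (h : Hom y x),
      comp (comp f g) h = comp f (comp g h)
  comp_add_left : ∀ {z y x : Ob} (f f' : Hom z y) (g : Hom y x),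
      comp (f + f') g = comp f g + comp f' g
  comp_add_right : ∀ {z y x : Ob} (f : Hom z y) (g g' : Hom y x),
      comp f (g + g') = comp f g + comp f g'
  comp_smul_left : ∀ {z y x : Ob} (c : R) (f : Hom z y) (g : Hom y x),
      comp (c • f) g = c • comp f g
  comp_smul_right : ∀ {z y x : Ob} (c : R) (f : Hom z y) (g : Hom y x),
      comp f (c • g) = c • comp f g

attribute [instance] RSemicat.homAdd RSemicat.homMod

namespace RSemicat

variable {R : Type u} [CommRing R] {Ob : Type v}

theorem comp_zero_left (C : RSemicat.{u, v, w} R Ob) {z y x : Ob} (g : C.Hom y x) :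
    C.comp (0 : C.Hom z y) g = 0 := by
  have h := C.comp_add_left (0 : C.Hom z y) 0 g
  rw [add_zero] at h
  exact left_eq_add.mp h

theorem comp_zero_right (C : RSemicat.{u, v, w} R Ob) {z y x : Ob} (f : C.Hom z y) :
    C.comp f (0 : C.Hom y x) = 0 := by
  have h := C.comp_add_right f (0 : C.Hom y x) 0
  rw [add_zero] at h
  exact left_eq_add.mp h

/-- An ideal of an `R`-semicategory: a family of submodules closed under
composition with arbitrary morphisms on either side. -/
def IsIdeal (C : RSemicat R Ob) (I : ∀ y x : Ob, Submodule R (C.Hom y x)) : Prop :=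
  (∀ (z y x : Ob) (u : C.Hom z y) (f : C.Hom y x), f ∈ I y x → C.comp u f ∈ I z x) ∧
  (∀ (z y x : Ob) (f : C.Hom z y) (u : C.Hom y x), f ∈ I z y → C.comp f u ∈ I z x)

/-- `J` is an ideal of the ideal `I`: `J ⊆ I` and `J` is closed under
composition with morphisms of `I` on either side. -/
def IsIdealIn (C : RSemicat R Ob) (J I : ∀ y x : Ob, Submodule R (C.Hom y x)) : Prop :=
  (∀ y x, J y x ≤ I y x) ∧
  (∀ (z y x : Ob) (u : C.Hom z y) (f : C.Hom y x), u ∈ I z y → f ∈ J y x → C.comp u f ∈ J z x) ∧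
  (∀ (z y x : Ob) (f : C.Hom z y) (u : C.Hom y x), f ∈ J z y → u ∈ I y x → C.comp f u ∈ J z x)

/-- `u ∈ _xI_x` is a local identity of the ideal `I` at the object `x`. -/
def IsLocalIdentity (C : RSemicat R Ob) (I : ∀ y x : Ob, Submodule R (C.Hom y x))
    (x : Ob) (u : C.Hom x x) : Prop :=
  (∀ (y : Ob) (f : C.Hom x y), f ∈ I x y → C.comp u f = f) ∧
  (∀ (y : Ob) (f : C.Hom y x), f ∈ I y x → C.comp f u = f)

/-- `u ∈ _xI_x` is a left local identity of the ideal `I` at the object `x`. -/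
def IsLeftLocalIdentity (C : RSemicat R Ob) (I : ∀ y x : Ob, Submodule R (C.Hom y x))
    (x : Ob) (u : C.Hom x x) : Prop :=
  ∀ (y : Ob) (f : C.Hom x y), f ∈ I x y → C.comp u f = f

/-- An `R`-semicategory is an `R`-category when every object has an
identity morphism. -/
def HasIdentities (C : RSemicat R Ob) : Prop :=
  ∀ x : Ob, ∃ u : C.Hom x x,
    (∀ (y : Ob) (f : C.Hom x y), C.comp u f = f) ∧
    (∀ (y : Ob) (f : C.Hom y x), C.comp f u = f)

end RSemicat

/-- The raw data of a partial action of a groupoid (with morphism type `G`)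
on an `R`-semicategory `C`: domains `D₀ g` and (total extensions of) maps
`act₀ g` on objects, a family of submodules `I g` (the ideals `I^g`) and
(total extensions of) maps `act g : I^{g⁻¹} → I^g` on morphisms. -/
structure SemicatActionData (R : Type u) [CommRing R] (G : Type u₂) {Ob : Type v}
    (C : RSemicat.{u, v, w} R Ob) where
  D₀ : G → Set Ob
  act₀ : G → Ob → Ob
  I : G → ∀ y x : Ob, Submodule R (C.Hom y x)
  act : ∀ (g : G) {y x : Ob}, C.Hom y x → C.Hom (act₀ g y) (act₀ g x)

variable {R : Type u} [CommRing R] {G : Type u₂} {Ob : Type v}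

/-- Definition of a partial action of a groupoid `𝒢` on an `R`-semicategory `C`. -/
def IsSemicatPartialAction (𝒢 : AlgGroupoid G) (C : RSemicat.{u, v, w} R Ob)
    (a : SemicatActionData R G C) : Prop :=
  -- (i) a partial action on the set of objects
  𝒢.IsSetPartialAction a.D₀ a.act₀ ∧
  -- (ii) `_yI^g_x = 0` unless `{y, x} ⊆ C₀^g`
  (∀ (g : G) (y x : Ob), ¬(y ∈ a.D₀ g ∧ x ∈ a.D₀ g) → a.I g y x = ⊥) ∧
  -- `I^g ⊴ I^{r g} ⊴ C`
  (∀ g : G, C.IsIdealIn (a.I g) (a.I (𝒢.r g))) ∧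
  (∀ g : G, C.IsIdeal (a.I (𝒢.r g))) ∧
  -- (iii) `α^g : I^{g⁻¹} → I^g` is an isomorphism of `R`-semicategories
  (∀ (g : G) (y x : Ob) (f : C.Hom y x), f ∈ a.I (𝒢.inv g) y x →
      a.act g f ∈ a.I g (a.act₀ g y) (a.act₀ g x)) ∧
  (∀ (g : G) (y x : Ob) (f f' : C.Hom y x), f ∈ a.I (𝒢.inv g) y x →
      f' ∈ a.I (𝒢.inv g) y x → a.act g (f + f') = a.act g f + a.act g f') ∧
  (∀ (g : G) (y x : Ob) (c : R) (f : C.Hom y x), f ∈ a.I (𝒢.inv g) y x →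
      a.act g (c • f) = c • a.act g f) ∧
  (∀ (g : G) (y x : Ob) (f f' : C.Hom y x), f ∈ a.I (𝒢.inv g) y x →
      f' ∈ a.I (𝒢.inv g) y x → a.act g f = a.act g f' → f = f') ∧
  (∀ g : G, ∀ y ∈ a.D₀ (𝒢.inv g), ∀ x ∈ a.D₀ (𝒢.inv g),
      ∀ k ∈ a.I g (a.act₀ g y) (a.act₀ g x), ∃ f ∈ a.I (𝒢.inv g) y x, a.act g f = k) ∧
  (∀ (g : G) (z y x : Ob) (f : C.Hom z y) (f' : C.Hom y x), f ∈ a.I (𝒢.inv g) z y →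
      f' ∈ a.I (𝒢.inv g) y x → a.act g (C.comp f f') = C.comp (a.act g f) (a.act g f')) ∧
  -- (iv) `α^e = id` on `I^e` for identities `e`
  (∀ e ∈ 𝒢.units, ∀ (y x : Ob) (f : C.Hom y x), f ∈ a.I e y x → HEq (a.act e f) f) ∧
  -- (v)
  (∀ g h : G, 𝒢.comp g h → ∀ (y x : Ob) (f : C.Hom y x),
      f ∈ a.I h y x → f ∈ a.I (𝒢.inv g) y x →
      a.act (𝒢.inv h) f ∈
        a.I (𝒢.inv (𝒢.mul g h)) (a.act₀ (𝒢.inv h) y) (a.act₀ (𝒢.inv h) x)) ∧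
  -- (vi) `α^g ∘ α^h = α^{gh}` on `α^{h⁻¹}(I^h ∩ I^{g⁻¹})`
  (∀ g h : G, 𝒢.comp g h → ∀ (y x : Ob) (f : C.Hom y x), f ∈ a.I (𝒢.inv h) y x →
      a.act h f ∈ a.I (𝒢.inv g) (a.act₀ h y) (a.act₀ h x) →
      HEq (a.act g (a.act h f)) (a.act (𝒢.mul g h) f))

/-- A partial action of a groupoid on an `R`-semicategory is global when
`α^g ∘ α^h = α^{gh}` and `α₀^g ∘ α₀^h = α₀^{gh}` for every composable pair. -/
def SemicatActionIsGlobal (𝒢 : AlgGroupoid G) (C : RSemicat.{u, v, w} R Ob)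
    (a : SemicatActionData R G C) : Prop :=
  𝒢.SetActionIsGlobal a.D₀ a.act₀ ∧
  ∀ g h : G, 𝒢.comp g h → ∀ (y x : Ob) (f : C.Hom y x),
    (f ∈ a.I (𝒢.inv (𝒢.mul g h)) y x ↔
      f ∈ a.I (𝒢.inv h) y x ∧ a.act h f ∈ a.I (𝒢.inv g) (a.act₀ h y) (a.act₀ h x)) ∧
    (f ∈ a.I (𝒢.inv (𝒢.mul g h)) y x → HEq (a.act g (a.act h f)) (a.act (𝒢.mul g h) f))
section Skew

variable (𝒢 : AlgGroupoid G)

/-- The product of homogeneous components in the (possibly non-associative)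
partial skew groupoid semicategory `C ∗_α 𝒢`:
for `f ∈ _zI^t_{ty}` and `l ∈ _yI^g_{gx}` the product is
`α^t(α^{t⁻¹}(f) ∘ l) ∈ _zI^{tg}_{(tg)x}` when `(t, g)` is composable and
`x ∈ C₀^{(tg)⁻¹}`, and `0` otherwise. -/
def skewMul (C : RSemicat.{u, v, w} R Ob) (a : SemicatActionData R G C) (t g : G)
    {z y x : Ob} (f : C.Hom z (a.act₀ t y)) (l : C.Hom y (a.act₀ g x)) :
    C.Hom z (a.act₀ (𝒢.mul t g) x) :=
  if h : 𝒢.comp t g ∧ x ∈ a.D₀ (𝒢.inv (𝒢.mul t g)) ∧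
      a.act₀ (𝒢.inv t) (a.act₀ t y) = y ∧ a.act₀ t (a.act₀ (𝒢.inv t) z) = z ∧
      a.act₀ t (a.act₀ g x) = a.act₀ (𝒢.mul t g) x then
    cast (by rw [h.2.2.2.1, h.2.2.2.2])
      (a.act t (C.comp (cast (by rw [h.2.2.1]) (a.act (𝒢.inv t) f)) l))
  else 0

/-- Associativity of the partial skew groupoid semicategory `C ∗_α 𝒢`:
`(f l) k = f (l k)` on homogeneous components. -/
def SkewAssoc (C : RSemicat.{u, v, w} R Ob) (a : SemicatActionData R G C) : Prop :=
  ∀ (t g h : G) (z y x u : Ob),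
    y ∈ a.D₀ (𝒢.inv t) → x ∈ a.D₀ (𝒢.inv g) → u ∈ a.D₀ (𝒢.inv h) →
    ∀ (f : C.Hom z (a.act₀ t y)) (l : C.Hom y (a.act₀ g x)) (k : C.Hom x (a.act₀ h u)),
      f ∈ a.I t z (a.act₀ t y) → l ∈ a.I g y (a.act₀ g x) → k ∈ a.I h x (a.act₀ h u) →
      HEq (skewMul 𝒢 C a (𝒢.mul t g) h (skewMul 𝒢 C a t g f l) k)
          (skewMul 𝒢 C a t (𝒢.mul g h) f (skewMul 𝒢 C a g h l k))

end Skew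

section Algebra

/-- The underlying module of the `R`-algebra `a(C) = ⊕_{x,y ∈ C₀} _yC_x`. -/
abbrev aHom (C : RSemicat.{u, v, w} R Ob) : Type (max v w) :=
  Π₀ p : Ob × Ob, C.Hom p.1 p.2

/-- The multiplication of the `R`-algebra `a(C)`: the matrix product
induced by the composition of `C`. -/
def aMul (C : RSemicat.{u, v, w} R Ob) (F K : aHom C) : aHom C :=
  DFinsupp.sum F fun p v => DFinsupp.sum K fun q w =>
    if h : p.2 = q.1 then
      DFinsupp.single (⟨p.1, q.2⟩ : Ob × Ob) (C.comp v (cast (by rw [h]) w : C.Hom p.2 q.2))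
    else 0

/-- `a(C)_g = ⊕_{x,y} _yI^g_x` as a subset of `a(C)`. -/
def aIdealSet (C : RSemicat.{u, v, w} R Ob) (a : SemicatActionData R G C) (g : G) :
    Set (aHom C) :=
  {F | ∀ p : Ob × Ob, F p ∈ a.I g p.1 p.2}

/-- The map `a(C)_{g⁻¹} → a(C)_g` induced componentwise by `α^g`. -/
def aAct {C : RSemicat.{u, v, w} R Ob} (a : SemicatActionData R G C) (g : G)
    (F : aHom C) : aHom C :=
  DFinsupp.sum F fun p v =>
    DFinsupp.single (⟨a.act₀ g p.1, a.act₀ g p.2⟩ : Ob × Ob) (a.act g v)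

/-- A multiplier `(Rm, Lm)` of the (possibly non-unital) "ring" given by a
multiplication `mul` on the subset `A` of an additive group `M`. -/
def IsMultiplierOn {M : Type*} [AddCommGroup M] (mul : M → M → M) (A : Set M)
    (Rm Lm : M → M) : Prop :=
  (∀ a ∈ A, Rm a ∈ A) ∧ (∀ a ∈ A, Lm a ∈ A) ∧
  (∀ a ∈ A, ∀ b ∈ A, Rm (a + b) = Rm a + Rm b) ∧
  (∀ a ∈ A, ∀ b ∈ A, Lm (a + b) = Lm a + Lm b) ∧
  (∀ a ∈ A, ∀ b ∈ A, Rm (mul a b) = mul a (Rm b)) ∧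
  (∀ a ∈ A, ∀ b ∈ A, Lm (mul a b) = mul (Lm a) b) ∧
  (∀ a ∈ A, ∀ b ∈ A, mul (Rm a) b = mul a (Lm b))

/-- `(L, R)`-associativity: for any two multipliers `(Rm, Lm)` and
`(Rm', Lm')` one has `Rm ∘ Lm' = Lm' ∘ Rm`. -/
def IsLRAssocOn {M : Type*} [AddCommGroup M] (mul : M → M → M) (A : Set M) : Prop :=
  ∀ Rm Lm Rm' Lm', IsMultiplierOn mul A Rm Lm → IsMultiplierOn mul A Rm' Lm' →
    ∀ a ∈ A, Rm (Lm' a) = Lm' (Rm a)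

/-- `J` is a two-sided ideal of the "ring" `I ⊆ M` (with multiplication `mul`). -/
def IsRingIdealPair {M : Type*} [AddCommGroup M] (mul : M → M → M) (J I : Set M) : Prop :=
  J ⊆ I ∧ (0 : M) ∈ J ∧ (∀ a ∈ J, ∀ b ∈ J, a + b ∈ J) ∧ (∀ a ∈ J, -a ∈ J) ∧
  (∀ a ∈ I, ∀ b ∈ J, mul a b ∈ J ∧ mul b a ∈ J)

/-- A partial action of a groupoid `𝒢` on the (possibly non-unital) ring
`(M, mul)`: ideals `D (r g) ⊴ M`, `D g ⊴ D (r g)` and ring isomorphisms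
`act g : D g⁻¹ → D g` satisfying the partial action axioms. -/
def IsRingPartialAction {M : Type*} [AddCommGroup M] (𝒢 : AlgGroupoid G)
    (mul : M → M → M) (D : G → Set M) (act : G → M → M) : Prop :=
  (∀ g, IsRingIdealPair mul (D (𝒢.r g)) Set.univ) ∧
  (∀ g, IsRingIdealPair mul (D g) (D (𝒢.r g))) ∧
  (∀ g, ∀ x ∈ D (𝒢.inv g), act g x ∈ D g) ∧
  (∀ g, ∀ x ∈ D (𝒢.inv g), act (𝒢.inv g) (act g x) = x) ∧
  (∀ g, ∀ y ∈ D g, ∃ x ∈ D (𝒢.inv g), act g x = y) ∧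
  (∀ g, ∀ x ∈ D (𝒢.inv g), ∀ y ∈ D (𝒢.inv g), act g (x + y) = act g x + act g y) ∧
  (∀ g, ∀ x ∈ D (𝒢.inv g), ∀ y ∈ D (𝒢.inv g), act g (mul x y) = mul (act g x) (act g y)) ∧
  (∀ e ∈ 𝒢.units, ∀ x ∈ D e, act e x = x) ∧
  (∀ g h, 𝒢.comp g h → ∀ x, x ∈ D (𝒢.inv g) → x ∈ D h →
      act (𝒢.inv h) x ∈ D (𝒢.inv (𝒢.mul g h))) ∧
  (∀ g h, 𝒢.comp g h → ∀ x ∈ D (𝒢.inv h), act h x ∈ D (𝒢.inv g) →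
      act g (act h x) = act (𝒢.mul g h) x)

/-- A partial ring action is global when `α_g ∘ α_h = α_{gh}` for every
composable pair. -/
def RingActionIsGlobal {M : Type*} (𝒢 : AlgGroupoid G)
    (D : G → Set M) (act : G → M → M) : Prop :=
  ∀ g h, 𝒢.comp g h →
    (∀ x, x ∈ D (𝒢.inv (𝒢.mul g h)) ↔ x ∈ D (𝒢.inv h) ∧ act h x ∈ D (𝒢.inv g)) ∧
    (∀ x ∈ D (𝒢.inv (𝒢.mul g h)), act g (act h x) = act (𝒢.mul g h) x)

end Algebra
section Globalization

variable {Ob' : Type v'}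

/-- Membership in the image ideal `φ(I)` (inside the semicategory `D`),
with the convention that its components vanish away from the image of `ι`. -/
def ImageMem (C : RSemicat.{u, v, w} R Ob) (D : RSemicat.{u, v', w'} R Ob') (ι : Ob → Ob')
    (I : ∀ y x : Ob, Submodule R (C.Hom y x))
    (φ : ∀ {y x : Ob}, C.Hom y x → D.Hom (ι y) (ι x))
    {z x' : Ob'} (k : D.Hom z x') : Prop :=
  k = 0 ∨ ∃ (y x : Ob) (f : C.Hom y x), f ∈ I y x ∧ ι y = z ∧ ι x = x' ∧ HEq (φ f) k

/-- The data of a (candidate) globalization of a partial action on `C`: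
a global action on the semicategory `D`, an inclusion `ι : C₀ → D₀` of object
sets, and semifunctors `φ_e : I^e → J^e` acting as `ι` on objects. -/
structure GlobalizationData (R : Type u) [CommRing R] (G : Type u₂) {Ob : Type v}
    {Ob' : Type v'} (C : RSemicat.{u, v, w} R Ob) (D : RSemicat.{u, v', w'} R Ob') where
  b : SemicatActionData R G D
  ι : Ob → Ob'
  φ : ∀ (e : G) {y x : Ob}, C.Hom y x → D.Hom (ι y) (ι x)

/-- `(D, β, (φ_e))` is a globalization of the partial groupoid action
`(C, α)` (Definition 3.2 of the paper). -/
def IsGlobalization (𝒢 : AlgGroupoid G) (C : RSemicat.{u, v, w} R Ob)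
    (a : SemicatActionData R G C) (D : RSemicat.{u, v', w'} R Ob')
    (gd : GlobalizationData R G C D) : Prop :=
  Function.Injective gd.ι ∧
  -- β is a global action of 𝒢 on D
  IsSemicatPartialAction 𝒢 D gd.b ∧
  SemicatActionIsGlobal 𝒢 D gd.b ∧
  -- (i) the object-level action β₀ is a globalization of α₀
  (∀ e ∈ 𝒢.units, ∀ x : Ob, x ∈ a.D₀ e ↔ gd.ι x ∈ gd.b.D₀ e) ∧
  (∀ g : G, ∀ x : Ob, x ∈ a.D₀ g ↔
      (gd.ι x ∈ gd.b.D₀ (𝒢.r g) ∧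
        ∃ x' : Ob, gd.ι x' ∈ gd.b.D₀ (𝒢.d g) ∧ gd.b.act₀ g (gd.ι x') = gd.ι x)) ∧
  (∀ g : G, ∀ x ∈ a.D₀ (𝒢.inv g), gd.ι (a.act₀ g x) = gd.b.act₀ g (gd.ι x)) ∧
  -- (ii) each φ_e is a faithful semifunctor with φ_e(I^e) ⊴ J^e
  (∀ e ∈ 𝒢.units,
    (∀ (y x : Ob) (f f' : C.Hom y x), f ∈ a.I e y x → f' ∈ a.I e y x →
        gd.φ e (f + f') = gd.φ e f + gd.φ e f') ∧
    (∀ (y x : Ob) (c : R) (f : C.Hom y x), f ∈ a.I e y x →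
        gd.φ e (c • f) = c • gd.φ e f) ∧
    (∀ (z y x : Ob) (f : C.Hom z y) (f' : C.Hom y x), f ∈ a.I e z y → f' ∈ a.I e y x →
        gd.φ e (C.comp f f') = D.comp (gd.φ e f) (gd.φ e f')) ∧
    (∀ (y x : Ob) (f f' : C.Hom y x), f ∈ a.I e y x → f' ∈ a.I e y x →
        gd.φ e f = gd.φ e f' → f = f') ∧
    (∀ (y x : Ob) (f : C.Hom y x), f ∈ a.I e y x →
        gd.φ e f ∈ gd.b.I e (gd.ι y) (gd.ι x))) ∧
  (∀ e ∈ 𝒢.units, ∀ (w z x' : Ob') (u : D.Hom w z) (k : D.Hom z x'),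
      u ∈ gd.b.I e w z → ImageMem C D gd.ι (a.I e) (gd.φ e) k →
      ImageMem C D gd.ι (a.I e) (gd.φ e) (D.comp u k)) ∧
  (∀ e ∈ 𝒢.units, ∀ (z x' w : Ob') (k : D.Hom z x') (u : D.Hom x' w),
      ImageMem C D gd.ι (a.I e) (gd.φ e) k → u ∈ gd.b.I e x' w →
      ImageMem C D gd.ι (a.I e) (gd.φ e) (D.comp k u)) ∧
  -- (iii) φ_{r g}(_yI^g_x) = φ_{r g}(_yI^{r g}_x) ∩ β^g(φ_{d g}(_{g⁻¹y}I^{d g}_{g⁻¹x}))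
  (∀ g : G, ∀ y ∈ a.D₀ g, ∀ x ∈ a.D₀ g, ∀ k : D.Hom (gd.ι y) (gd.ι x),
      (∃ f ∈ a.I g y x, gd.φ (𝒢.r g) f = k) ↔
        ((∃ f ∈ a.I (𝒢.r g) y x, gd.φ (𝒢.r g) f = k) ∧
          ∃ f' : C.Hom (a.act₀ (𝒢.inv g) y) (a.act₀ (𝒢.inv g) x),
            f' ∈ a.I (𝒢.d g) (a.act₀ (𝒢.inv g) y) (a.act₀ (𝒢.inv g) x) ∧
            HEq (gd.b.act g (gd.φ (𝒢.d g) f')) k)) ∧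
  -- (iv) β^g ∘ φ_{d g} = φ_{r g} ∘ α^g on I^{g⁻¹}
  (∀ (g : G) (y x : Ob) (f : C.Hom y x), f ∈ a.I (𝒢.inv g) y x →
      HEq (gd.b.act g (gd.φ (𝒢.d g) f)) (gd.φ (𝒢.r g) (a.act g f))) ∧
  -- (v) _yJ^g_x = Σ_{r h = r g} β^h(φ_{d h}(_{h⁻¹y}I^{d h}_{h⁻¹x}))
  (∀ (g : G) (y x : Ob'), gd.b.I g y x = Submodule.span R
      {m : D.Hom y x | ∃ h : G, 𝒢.r h = 𝒢.r g ∧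
        ∃ (y' x' : Ob) (f : C.Hom y' x'), f ∈ a.I (𝒢.d h) y' x' ∧
          gd.ι y' = gd.b.act₀ (𝒢.inv h) y ∧ gd.ι x' = gd.b.act₀ (𝒢.inv h) x ∧
          HEq (gd.b.act h (gd.φ (𝒢.d h) f)) m})

/-- The ring homomorphism `ψ_e : a(C) → a(D)` induced componentwise by a
semifunctor `φ_e`. -/
def aPhiRing {C : RSemicat.{u, v, w} R Ob} {D : RSemicat.{u, v', w'} R Ob'}
    (ι : Ob → Ob') (φ : ∀ (e : G) {y x : Ob}, C.Hom y x → D.Hom (ι y) (ι x))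
    (e : G) (F : aHom C) : aHom D :=
  DFinsupp.sum F fun p v => DFinsupp.single (⟨ι p.1, ι p.2⟩ : Ob' × Ob') (φ e v)

/-- A global action `(DN, actN)` of `𝒢` on the ring `(N, mulN)` is a
globalization of the partial ring action `(DM, actM)` of `𝒢` on `(M, mulM)`
via the ring monomorphisms `ψ_e` (Definition 3.1 of the paper). -/
def IsRingGlobalization {M N : Type*} [AddCommGroup M] [AddCommGroup N]
    (𝒢 : AlgGroupoid G)
    (mulM : M → M → M) (DM : G → Set M) (actM : G → M → M)
    (mulN : N → N → N) (DN : G → Set N) (actN : G → N → N)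
    (ψ : G → M → N) : Prop :=
  IsRingPartialAction 𝒢 mulN DN actN ∧
  RingActionIsGlobal 𝒢 DN actN ∧
  (∀ e ∈ 𝒢.units,
    (∀ x ∈ DM e, ψ e x ∈ DN e) ∧
    (∀ x ∈ DM e, ∀ y ∈ DM e, ψ e (x + y) = ψ e x + ψ e y) ∧
    (∀ x ∈ DM e, ∀ y ∈ DM e, ψ e (mulM x y) = mulN (ψ e x) (ψ e y)) ∧
    (∀ x ∈ DM e, ∀ y ∈ DM e, ψ e x = ψ e y → x = y) ∧
    -- (i) ψ_e(A_e) is an ideal of B_e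
    IsRingIdealPair mulN (ψ e '' DM e) (DN e)) ∧
  -- (ii)
  (∀ g : G, ψ (𝒢.r g) '' DM g =
      (ψ (𝒢.r g) '' DM (𝒢.r g)) ∩ (actN g '' (ψ (𝒢.d g) '' DM (𝒢.d g)))) ∧
  -- (iii)
  (∀ g : G, ∀ x ∈ DM (𝒢.inv g), actN g (ψ (𝒢.d g) x) = ψ (𝒢.r g) (actM g x)) ∧
  -- (iv)
  (∀ g : G, ∀ k : N, k ∈ DN g ↔ k ∈ AddSubgroup.closure
      {m : N | ∃ h : G, 𝒢.r h = 𝒢.r g ∧ ∃ F ∈ DM (𝒢.d h), m = actN h (ψ (𝒢.d h) F)})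

end Globalization

section Orbits

/-- The orbit relation induced by a partial action of a groupoid: `e ∼ f`
iff `f = g e` for some morphism `g` with `e` in the domain of `α_g`. -/
def orbRel {Y : Type*} (𝒢 : AlgGroupoid G) (D : G → Set Y) (act : G → Y → Y)
    (e f : Y) : Prop :=
  ∃ g : G, e ∈ D (𝒢.inv g) ∧ act g e = f

/-- `C(ρ,τ)_g = ⊕_{x ∈ ρ, y ∈ τ} _yI^g_x`, realized inside `a(C)`. -/
def CSet (C : RSemicat.{u, v, w} R Ob) (a : SemicatActionData R G C)
    (ρ τ : Set Ob) (g : G) : Set (aHom C) :=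
  {F | ∀ p : Ob × Ob, F p ∈ a.I g p.1 p.2 ∧ (F p ≠ 0 → p.1 ∈ τ ∧ p.2 ∈ ρ)}

end Orbits
section SkewCatAlgebra

/-- The morphism module `_y(C∗_α𝒢)_x = ⊕_{g} _yI^g_{gx}` of the partial skew
groupoid semicategory (realized as a direct sum over all of `G`; the genuine
morphisms are those supported on `𝒢^x` with components in `I^g`). -/
abbrev SkewHomT (C : RSemicat.{u, v, w} R Ob) (a : SemicatActionData R G C)
    (y x : Ob) : Type (max u₂ w) :=
  Π₀ g : G, C.Hom y (a.act₀ g x)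

/-- Composition in the partial skew groupoid semicategory `C∗_α𝒢`. -/
def skewHomMul (𝒢 : AlgGroupoid G) (C : RSemicat.{u, v, w} R Ob)
    (a : SemicatActionData R G C) {z y x : Ob}
    (F : SkewHomT C a z y) (K : SkewHomT C a y x) : SkewHomT C a z x :=
  DFinsupp.sum F fun t f => DFinsupp.sum K fun g l =>
    DFinsupp.single (𝒢.mul t g) (skewMul 𝒢 C a t g f l)

/-- The underlying module of the algebra `a(C∗_α𝒢)`. -/
abbrev aSkewT (C : RSemicat.{u, v, w} R Ob) (a : SemicatActionData R G C) :
    Type (max v u₂ w) :=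
  Π₀ p : Ob × Ob, SkewHomT C a p.1 p.2

/-- The multiplication of the algebra `a(C∗_α𝒢)`. -/
def aSkewMul (𝒢 : AlgGroupoid G) (C : RSemicat.{u, v, w} R Ob)
    (a : SemicatActionData R G C) (F K : aSkewT C a) : aSkewT C a :=
  DFinsupp.sum F fun p u => DFinsupp.sum K fun q v =>
    if h : p.2 = q.1 then
      DFinsupp.single (⟨p.1, q.2⟩ : Ob × Ob)
        (skewHomMul 𝒢 C a u (cast (by rw [h]) v : SkewHomT C a p.2 q.2))
    else 0

/-- The set of genuine elements of `a(C∗_α𝒢)` inside `aSkewT`. -/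
def aSkewSet (𝒢 : AlgGroupoid G) (C : RSemicat.{u, v, w} R Ob)
    (a : SemicatActionData R G C) : Set (aSkewT C a) :=
  {F | ∀ (p : Ob × Ob) (g : G), F p g ∈ a.I g p.1 (a.act₀ g p.2) ∧
    (p.2 ∉ a.D₀ (𝒢.inv g) → F p g = 0)}

/-- The underlying module of the partial skew groupoid ring
`a(C)∗_α𝒢 = ⊕_g a(C)_g δ_g`. -/
abbrev sRingT (G : Type u₂) (C : RSemicat.{u, v, w} R Ob) : Type (max v u₂ w) :=
  Π₀ _g : G, aHom C

/-- The multiplication of the partial skew groupoid ring `a(C)∗_α𝒢`: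
`(a_g δ_g)(b_h δ_h) = α_g(α_{g⁻¹}(a_g) b_h) δ_{gh}` when `(g,h)` is
composable, and `0` otherwise. -/
def sRingMul (𝒢 : AlgGroupoid G) (C : RSemicat.{u, v, w} R Ob)
    (a : SemicatActionData R G C) (F K : sRingT G C) : sRingT G C :=
  DFinsupp.sum F fun g ag => DFinsupp.sum K fun h bh =>
    if 𝒢.comp g h then
      DFinsupp.single (𝒢.mul g h) (aAct a g (aMul C (aAct a (𝒢.inv g) ag) bh))
    else 0

/-- The set of genuine elements of `a(C)∗_α𝒢` inside `sRingT`. -/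
def sRingSet (C : RSemicat.{u, v, w} R Ob) (a : SemicatActionData R G C) :
    Set (sRingT G C) :=
  {K | ∀ (g : G) (p : Ob × Ob), K g p ∈ a.I g p.1 p.2}

/-- The isomorphism `a(C∗_α𝒢) → a(C)∗_α𝒢`, `f_g ↦ f_g δ_g`. -/
def aPhi (C : RSemicat.{u, v, w} R Ob) (a : SemicatActionData R G C)
    (F : aSkewT C a) : sRingT G C :=
  DFinsupp.sum F fun p u => DFinsupp.sum u fun g f =>
    DFinsupp.single g (DFinsupp.single (⟨p.1, a.act₀ g p.2⟩ : Ob × Ob) f)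

end SkewCatAlgebra

section Graded

/-- A `𝒢`-grading of an `R`-semicategory `B`: decompositions
`_yB_x = ⊕_{g} _yB_x^g` such that `_zB_y^t ⬝ _yB_x^s ⊆ _zB_x^{ts}` when
`d t = r s` and `_zB_y^t ⬝ _yB_x^s = 0` otherwise. -/
def IsGrading (𝒢 : AlgGroupoid G) (B : RSemicat.{u, v, w} R Ob)
    (deco : ∀ y x : Ob, G → Submodule R (B.Hom y x)) : Prop :=
  (∀ y x : Ob, DirectSum.IsInternal fun g : G => deco y x g) ∧
  (∀ (z y x : Ob) (t s : G), 𝒢.comp t s → ∀ u ∈ deco z y t, ∀ v ∈ deco y x s,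
      B.comp u v ∈ deco z x (𝒢.mul t s)) ∧
  (∀ (z y x : Ob) (t s : G), ¬ 𝒢.comp t s → ∀ u ∈ deco z y t, ∀ v ∈ deco y x s,
      B.comp u v = 0)

/-- The morphism submodule `_{(y,t)}(B#𝒢)_{(x,s)}` of the smash product:
`_yB_x^{t⁻¹ s}` when `r t = r s`, and `0` otherwise. -/
def smashMod (𝒢 : AlgGroupoid G) (B : RSemicat.{u, v, w} R Ob)
    (deco : ∀ y x : Ob, G → Submodule R (B.Hom y x))
    (yt xs : Ob × G) : Submodule R (B.Hom yt.1 xs.1) :=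
  if 𝒢.r yt.2 = 𝒢.r xs.2 then deco yt.1 xs.1 (𝒢.mul (𝒢.inv yt.2) xs.2) else ⊥

/-- The smash product `R`-semicategory `B#𝒢`. -/
def Smash (𝒢 : AlgGroupoid G) (B : RSemicat.{u, v, w} R Ob)
    (deco : ∀ y x : Ob, G → Submodule R (B.Hom y x))
    (hgr : IsGrading 𝒢 B deco) :
    RSemicat.{u, max v u₂, w} R (Ob × G) where
  Hom yt xs := ↥(smashMod 𝒢 B deco yt xs)
  comp {z y x} f g := ⟨B.comp f.1 g.1, by
    obtain ⟨fv, hf⟩ := f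
    obtain ⟨gv, hg⟩ := g
    show B.comp fv gv ∈ smashMod 𝒢 B deco z x
    unfold smashMod at hf hg ⊢
    by_cases h1 : 𝒢.r z.2 = 𝒢.r y.2
    · by_cases h2 : 𝒢.r y.2 = 𝒢.r x.2
      · rw [if_pos h1] at hf
        rw [if_pos h2] at hg
        rw [if_pos (h1.trans h2)]
        have c1 : 𝒢.comp (𝒢.inv z.2) y.2 :=
          (𝒢.comp_iff _ _).2 (by rw [𝒢.inv_inv']; exact h1)
        have c2 : 𝒢.comp (𝒢.inv y.2) x.2 :=
          (𝒢.comp_iff _ _).2 (by rw [𝒢.inv_inv']; exact h2)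
        have ccy : 𝒢.comp y.2 (𝒢.inv y.2) := 𝒢.comp_inv_right y.2
        have ccyc : 𝒢.comp y.2 (𝒢.mul (𝒢.inv y.2) x.2) :=
          𝒢.comp_mul_right y.2 (𝒢.inv y.2) x.2 ccy c2
        have hcomp : 𝒢.comp (𝒢.mul (𝒢.inv z.2) y.2) (𝒢.mul (𝒢.inv y.2) x.2) :=
          𝒢.comp_mul_left (𝒢.inv z.2) y.2 (𝒢.mul (𝒢.inv y.2) x.2) c1 ccyc
        have hmem := hgr.2.1 z.1 y.1 x.1 (𝒢.mul (𝒢.inv z.2) y.2)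
          (𝒢.mul (𝒢.inv y.2) x.2) hcomp fv hf gv hg
        have h2' : 𝒢.mul y.2 (𝒢.inv y.2) = 𝒢.mul x.2 (𝒢.inv x.2) := h2
        have s5 : 𝒢.mul x.2 (𝒢.mul (𝒢.inv x.2) x.2) = x.2 := by
          have h5 := 𝒢.inv_mul_cancel' (𝒢.inv x.2) x.2 (𝒢.comp_inv_left x.2)
          rwa [𝒢.inv_inv'] at h5
        have hidx : 𝒢.mul (𝒢.mul (𝒢.inv z.2) y.2) (𝒢.mul (𝒢.inv y.2) x.2) =
            𝒢.mul (𝒢.inv z.2) x.2 := by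
          rw [𝒢.mul_assoc' (𝒢.inv z.2) y.2 (𝒢.mul (𝒢.inv y.2) x.2) c1 ccyc,
            ← 𝒢.mul_assoc' y.2 (𝒢.inv y.2) x.2 ccy c2, h2',
            𝒢.mul_assoc' x.2 (𝒢.inv x.2) x.2 (𝒢.comp_inv_right x.2) (𝒢.comp_inv_left x.2),
            s5]
        rw [hidx] at hmem
        exact hmem
      · rw [if_neg h2] at hg
        have hg0 : gv = 0 := by simpa using hg
        rw [hg0, B.comp_zero_right]
        exact Submodule.zero_mem _
    · rw [if_neg h1] at hf
      have hf0 : fv = 0 := by simpa using hf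
      rw [hf0, B.comp_zero_left]
      exact Submodule.zero_mem _⟩
  comp_assoc f g h := Subtype.ext (B.comp_assoc f.1 g.1 h.1)
  comp_add_left f f' g := Subtype.ext (B.comp_add_left f.1 f'.1 g.1)
  comp_add_right f g g' := Subtype.ext (B.comp_add_right f.1 g.1 g'.1)
  comp_smul_left c f g := Subtype.ext (B.comp_smul_left c f.1 g.1)
  comp_smul_right c f g := Subtype.ext (B.comp_smul_right c f.1 g.1)

/-- The object part of the global action of `𝒢` on `B#𝒢`:
`α₀^g (x, s) = (x, g s)`. -/
def smashAct₀ (𝒢 : AlgGroupoid G) (g : G) (p : Ob × G) : Ob × G :=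
  (p.1, 𝒢.mul g p.2)

/-- The global action of `𝒢` on the smash product `B#𝒢` (domains
`B₀ × 𝒢(-, r g)`, `α₀^g(x,s) = (x, gs)`, ideals `_{(y,t)}I^g_{(x,s)}`
given by `_yB_x^{t⁻¹s}` when `r t = r s = r g` and `0` otherwise, and `α^g`
given by the identity on the underlying morphisms of `B`). -/
def smashActionData (𝒢 : AlgGroupoid G) (B : RSemicat.{u, v, w} R Ob)
    (deco : ∀ y x : Ob, G → Submodule R (B.Hom y x))
    (hgr : IsGrading 𝒢 B deco) :
    SemicatActionData R G (Smash 𝒢 B deco hgr) where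
  D₀ g := {p : Ob × G | 𝒢.r p.2 = 𝒢.r g}
  act₀ := smashAct₀ 𝒢
  I g yt xs := if 𝒢.r yt.2 = 𝒢.r g ∧ 𝒢.r xs.2 = 𝒢.r g then ⊤ else ⊥
  act g {yt xs} f :=
    if h : (f.1 : B.Hom yt.1 xs.1) ∈
        smashMod 𝒢 B deco (smashAct₀ 𝒢 g yt) (smashAct₀ 𝒢 g xs) then
      ⟨f.1, h⟩
    else 0

end Graded

/-!
Fix `g` and `x ∈ C₀^g`, and write `x' = g⁻¹x`. Take local identities `e` of `I^{r g}` at `x`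
and `e'` of `I^{d g}` at `x'`, and put `E = β^g(φ_{d g}(e'))`. Since
`φ_{r g}(I^g) = β^g(φ_{d g}(I^{g⁻¹}))` and `I^{g⁻¹} ⊆ I^{d g}`, the morphism `E` acts as a
two-sided identity on `φ_{r g}(I^g)` at `x`. The product `E φ_{r g}(e)` lies in the ideal
`φ_{r g}(I^{r g})` of `J^{r g}`, and it equals `β^g(φ_{d g}(e') β^{g⁻¹}(φ_{r g}(e)))`, which lies
in `β^g(φ_{d g}(I^{d g}))`. By condition (iii) it is `φ_{r g}(u)` for some `u ∈ _xI^g_x`, and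
faithfulness of `φ_{r g}` turns the identity properties of `E` and `e` into those of `u`.
Outside `C₀^g` the module `_xI^g_x` is zero.
-/

namespace AlgGroupoid

variable (𝒢 : AlgGroupoid G)

theorem d_mem_units (g : G) : 𝒢.d g ∈ 𝒢.units := ⟨g, rfl⟩

theorem d_inv (g : G) : 𝒢.d (𝒢.inv g) = 𝒢.r g := by
  rw [d, r, 𝒢.inv_inv']

theorem r_inv (g : G) : 𝒢.r (𝒢.inv g) = 𝒢.d g := by
  rw [d, r, 𝒢.inv_inv']

theorem r_mem_units (g : G) : 𝒢.r g ∈ 𝒢.units := 𝒢.d_inv g ▸ 𝒢.d_mem_units (𝒢.inv g)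

theorem inv_d (g : G) : 𝒢.inv (𝒢.d g) = 𝒢.d g := by
  rw [d, 𝒢.inv_mul' _ _ (𝒢.comp_inv_left g), 𝒢.inv_inv']

namespace IsPartialActionOn

variable {𝒢} {Y : Type v} {X : Set Y} {D : G → Set Y} {act : G → Y → Y}

theorem act_inv_mem (h : 𝒢.IsPartialActionOn X D act) {g : G} {y : Y} (hy : y ∈ D g) :
    act (𝒢.inv g) y ∈ D (𝒢.inv g) :=
  h.2.2.2.2.1 (𝒢.inv g) y (by rwa [𝒢.inv_inv'])

theorem act_act_inv (h : 𝒢.IsPartialActionOn X D act) {g : G} {y : Y} (hy : y ∈ D g) :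
    act g (act (𝒢.inv g) y) = y := by
  simpa only [𝒢.inv_inv'] using h.2.2.2.2.2.1 (𝒢.inv g) y (by rwa [𝒢.inv_inv'])

end IsPartialActionOn

end AlgGroupoid

theorem map_zero_of_map_add {M N : Type*} [AddCommGroup M] [AddCommGroup N] {p : M → Prop}
    (f : M → N) (h0 : p 0) (hadd : ∀ m m', p m → p m' → f (m + m') = f m + f m') :
    f 0 = 0 := by
  simpa using hadd 0 0 h0 h0

theorem heq_hom_congr {α β : Type*} {H : α → α → Sort*} {K : β → β → Sort*} (σ : α → β)
    (F : ∀ {y x : α}, H y x → K (σ y) (σ x)) {y y' x x' : α} (hy : y = y') (hx : x = x')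
    {f : H y x} {f' : H y' x'} (hf : HEq f f') : HEq (F f) (F f') := by
  subst hy hx; rw [eq_of_heq hf]

namespace RSemicat

variable (C : RSemicat.{u, v, w} R Ob)

theorem comp_heq_comp {z z' y y' x x' : Ob} (hz : z = z') (hy : y = y') (hx : x = x')
    {f : C.Hom z y} {f' : C.Hom z' y'} {k : C.Hom y x} {k' : C.Hom y' x'}
    (hf : HEq f f') (hk : HEq k k') : HEq (C.comp f k) (C.comp f' k') := by
  subst hz hy hx; rw [eq_of_heq hf, eq_of_heq hk]

theorem mem_iff_of_heq (I : ∀ y x : Ob, Submodule R (C.Hom y x)) {y y' x x' : Ob}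
    (hy : y = y') (hx : x = x') {f : C.Hom y x} {f' : C.Hom y' x'} (hf : HEq f f') :
    f ∈ I y x ↔ f' ∈ I y' x' := by
  subst hy hx; rw [eq_of_heq hf]

theorem isLocalIdentity_zero {I : ∀ y x : Ob, Submodule R (C.Hom y x)} {x : Ob}
    (hl : ∀ y, I x y = ⊥) (hr : ∀ y, I y x = ⊥) : C.IsLocalIdentity I x 0 := by
  refine ⟨fun y f hf => ?_, fun y f hf => ?_⟩
  · rw [hl y, Submodule.mem_bot] at hf
    rw [hf, comp_zero_left]
  · rw [hr y, Submodule.mem_bot] at hf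
    rw [hf, comp_zero_left]

end RSemicat

namespace IsSemicatPartialAction

variable {𝒢 : AlgGroupoid G} {C : RSemicat.{u, v, w} R Ob} {a : SemicatActionData R G C}

theorem I_eq_bot (h : IsSemicatPartialAction 𝒢 C a) {g : G} {y x : Ob}
    (hyx : ¬(y ∈ a.D₀ g ∧ x ∈ a.D₀ g)) : a.I g y x = ⊥ :=
  h.2.1 g y x hyx

theorem I_le_I_r (h : IsSemicatPartialAction 𝒢 C a) (g : G) (y x : Ob) :
    a.I g y x ≤ a.I (𝒢.r g) y x :=
  (h.2.2.1 g).1 y x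

theorem I_inv_le_I_d (h : IsSemicatPartialAction 𝒢 C a) (g : G) (y x : Ob) :
    a.I (𝒢.inv g) y x ≤ a.I (𝒢.d g) y x :=
  𝒢.r_inv g ▸ h.I_le_I_r (𝒢.inv g) y x

theorem comp_mem_I_r (h : IsSemicatPartialAction 𝒢 C a) {g : G} {z y x : Ob}
    (u : C.Hom z y) {f : C.Hom y x} (hf : f ∈ a.I (𝒢.r g) y x) :
    C.comp u f ∈ a.I (𝒢.r g) z x :=
  (h.2.2.2.1 g).1 z y x u f hf

theorem mem_I_r_comp (h : IsSemicatPartialAction 𝒢 C a) {g : G} {z y x : Ob}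
    {f : C.Hom z y} (u : C.Hom y x) (hf : f ∈ a.I (𝒢.r g) z y) :
    C.comp f u ∈ a.I (𝒢.r g) z x :=
  (h.2.2.2.1 g).2 z y x f u hf

theorem act_mem (h : IsSemicatPartialAction 𝒢 C a) {g : G} {y x : Ob} {f : C.Hom y x}
    (hf : f ∈ a.I (𝒢.inv g) y x) : a.act g f ∈ a.I g (a.act₀ g y) (a.act₀ g x) :=
  h.2.2.2.2.1 g y x f hf

theorem exists_act_eq (h : IsSemicatPartialAction 𝒢 C a) {g : G} {y x : Ob}
    (hy : y ∈ a.D₀ (𝒢.inv g)) (hx : x ∈ a.D₀ (𝒢.inv g)) {k : C.Hom (a.act₀ g y) (a.act₀ g x)}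
    (hk : k ∈ a.I g (a.act₀ g y) (a.act₀ g x)) : ∃ f ∈ a.I (𝒢.inv g) y x, a.act g f = k :=
  h.2.2.2.2.2.2.2.2.1 g y hy x hx k hk

theorem act_comp (h : IsSemicatPartialAction 𝒢 C a) {g : G} {z y x : Ob} {f : C.Hom z y}
    {f' : C.Hom y x} (hf : f ∈ a.I (𝒢.inv g) z y) (hf' : f' ∈ a.I (𝒢.inv g) y x) :
    a.act g (C.comp f f') = C.comp (a.act g f) (a.act g f') :=
  h.2.2.2.2.2.2.2.2.2.1 g z y x f f' hf hf'

theorem act_act_inv_heq (h : IsSemicatPartialAction 𝒢 C a) {g : G} {y x : Ob}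
    {f : C.Hom y x} (hf : f ∈ a.I g y x) : HEq (a.act g (a.act (𝒢.inv g) f)) f := by
  have hf' : f ∈ a.I (𝒢.inv (𝒢.inv g)) y x := by rwa [𝒢.inv_inv']
  refine (h.2.2.2.2.2.2.2.2.2.2.2.2 g (𝒢.inv g) (𝒢.comp_inv_right g) y x f hf'
    (h.act_mem hf')).trans ?_
  exact h.2.2.2.2.2.2.2.2.2.2.1 (𝒢.r g) (𝒢.r_mem_units g) y x f (h.I_le_I_r g y x hf)

theorem exists_act_heq (h : IsSemicatPartialAction 𝒢 C a) {g : G} {y x : Ob}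
    (hy : y ∈ a.D₀ g) (hx : x ∈ a.D₀ g) {f : C.Hom y x} (hf : f ∈ a.I g y x) :
    ∃ f₀ ∈ a.I (𝒢.inv g) (a.act₀ (𝒢.inv g) y) (a.act₀ (𝒢.inv g) x),
      HEq (a.act g f₀) f := by
  have hset := h.1
  have hyx := congrArg₂ C.Hom (hset.act_act_inv hy) (hset.act_act_inv hx)
  obtain ⟨f₀, hf₀, hf₀f⟩ := h.exists_act_eq (hset.act_inv_mem hy) (hset.act_inv_mem hx)
    (k := cast hyx.symm f) ((C.mem_iff_of_heq (a.I g) (hset.act_act_inv hy).symm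
      (hset.act_act_inv hx).symm (cast_heq hyx.symm f).symm).mp hf)
  exact ⟨f₀, hf₀, hf₀f ▸ cast_heq _ _⟩

end IsSemicatPartialAction

theorem SemicatActionIsGlobal.mem_I_inv_of_mem_I_d {𝒢 : AlgGroupoid G}
    {C : RSemicat.{u, v, w} R Ob} {a : SemicatActionData R G C}
    (h : SemicatActionIsGlobal 𝒢 C a) {g : G} {y x : Ob} {f : C.Hom y x}
    (hf : f ∈ a.I (𝒢.d g) y x) : f ∈ a.I (𝒢.inv g) y x := by
  have := (h.2 (𝒢.inv g) g (𝒢.comp_inv_left g) y x f).1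
  rw [← AlgGroupoid.d, 𝒢.inv_d] at this
  exact (this.mp hf).1

section Globalization

variable {Ob' : Type v'} {C : RSemicat.{u, v, w} R Ob} {D : RSemicat.{u, v', w'} R Ob'}

theorem ImageMem.exists_eq {ι : Ob → Ob'} (hι : Function.Injective ι)
    {I : ∀ y x : Ob, Submodule R (C.Hom y x)} {φ : ∀ {y x : Ob}, C.Hom y x → D.Hom (ι y) (ι x)}
    (hφ : ∀ y x : Ob, φ (0 : C.Hom y x) = 0) {y x : Ob} {k : D.Hom (ι y) (ι x)}
    (hk : ImageMem C D ι I φ k) : ∃ f ∈ I y x, φ f = k := by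
  rcases hk with rfl | ⟨y', x', f, hf, hy, hx, hfk⟩
  · exact ⟨0, zero_mem _, hφ y x⟩
  · obtain rfl := hι hy
    obtain rfl := hι hx
    exact ⟨f, hf, eq_of_heq hfk⟩

namespace IsGlobalization

variable {𝒢 : AlgGroupoid G} {a : SemicatActionData R G C} {gd : GlobalizationData R G C D}

theorem partialAction (h : IsGlobalization 𝒢 C a D gd) : IsSemicatPartialAction 𝒢 D gd.b :=
  h.2.1

theorem isGlobal (h : IsGlobalization 𝒢 C a D gd) : SemicatActionIsGlobal 𝒢 D gd.b :=
  h.2.2.1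

theorem ι_act₀ (h : IsGlobalization 𝒢 C a D gd) {g : G} {x : Ob}
    (hx : x ∈ a.D₀ (𝒢.inv g)) : gd.ι (a.act₀ g x) = gd.b.act₀ g (gd.ι x) :=
  h.2.2.2.2.2.1 g x hx

theorem φ_comp (h : IsGlobalization 𝒢 C a D gd) {e : G} (he : e ∈ 𝒢.units) {z y x : Ob}
    {f : C.Hom z y} {f' : C.Hom y x} (hf : f ∈ a.I e z y) (hf' : f' ∈ a.I e y x) :
    gd.φ e (C.comp f f') = D.comp (gd.φ e f) (gd.φ e f') :=
  (h.2.2.2.2.2.2.1 e he).2.2.1 z y x f f' hf hf'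

theorem φ_injective (h : IsGlobalization 𝒢 C a D gd) {e : G} (he : e ∈ 𝒢.units) {y x : Ob}
    {f f' : C.Hom y x} (hf : f ∈ a.I e y x) (hf' : f' ∈ a.I e y x)
    (hff' : gd.φ e f = gd.φ e f') : f = f' :=
  (h.2.2.2.2.2.2.1 e he).2.2.2.1 y x f f' hf hf' hff'

theorem φ_mem (h : IsGlobalization 𝒢 C a D gd) {e : G} (he : e ∈ 𝒢.units) {y x : Ob}
    {f : C.Hom y x} (hf : f ∈ a.I e y x) : gd.φ e f ∈ gd.b.I e (gd.ι y) (gd.ι x) :=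
  (h.2.2.2.2.2.2.1 e he).2.2.2.2 y x f hf

theorem φ_zero (h : IsGlobalization 𝒢 C a D gd) {e : G} (he : e ∈ 𝒢.units) (y x : Ob) :
    gd.φ e (0 : C.Hom y x) = 0 :=
  map_zero_of_map_add (gd.φ e) (zero_mem _) ((h.2.2.2.2.2.2.1 e he).1 y x)

theorem exists_φ_eq_comp_left (h : IsGlobalization 𝒢 C a D gd) {e : G} (he : e ∈ 𝒢.units)
    {y x : Ob} {u : D.Hom (gd.ι y) (gd.ι y)} (hu : u ∈ gd.b.I e (gd.ι y) (gd.ι y))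
    {f : C.Hom y x} (hf : f ∈ a.I e y x) : ∃ f' ∈ a.I e y x, gd.φ e f' = D.comp u (gd.φ e f) :=
  ImageMem.exists_eq h.1 (h.φ_zero he)
    (h.2.2.2.2.2.2.2.1 e he _ _ _ u _ hu (Or.inr ⟨y, x, f, hf, rfl, rfl, HEq.rfl⟩))

theorem exists_φ_eq_comp_right (h : IsGlobalization 𝒢 C a D gd) {e : G} (he : e ∈ 𝒢.units)
    {y x : Ob} {f : C.Hom y x} (hf : f ∈ a.I e y x) {u : D.Hom (gd.ι x) (gd.ι x)}
    (hu : u ∈ gd.b.I e (gd.ι x) (gd.ι x)) : ∃ f' ∈ a.I e y x, gd.φ e f' = D.comp (gd.φ e f) u :=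
  ImageMem.exists_eq h.1 (h.φ_zero he)
    (h.2.2.2.2.2.2.2.2.1 e he _ _ _ _ u (Or.inr ⟨y, x, f, hf, rfl, rfl, HEq.rfl⟩) hu)

theorem exists_mem_I_of_exists_act (h : IsGlobalization 𝒢 C a D gd) {g : G} {y x : Ob}
    (hy : y ∈ a.D₀ g) (hx : x ∈ a.D₀ g) {k : D.Hom (gd.ι y) (gd.ι x)}
    (hk : ∃ f ∈ a.I (𝒢.r g) y x, gd.φ (𝒢.r g) f = k)
    (hk' : ∃ f' ∈ a.I (𝒢.d g) (a.act₀ (𝒢.inv g) y) (a.act₀ (𝒢.inv g) x),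
      HEq (gd.b.act g (gd.φ (𝒢.d g) f')) k) :
    ∃ f ∈ a.I g y x, gd.φ (𝒢.r g) f = k := by
  obtain ⟨f', hf', hf'k⟩ := hk'
  exact (h.2.2.2.2.2.2.2.2.2.1 g y hy x hx k).mpr ⟨hk, f', hf', hf'k⟩

theorem act_φ_heq (h : IsGlobalization 𝒢 C a D gd) {g : G} {y x : Ob} {f : C.Hom y x}
    (hf : f ∈ a.I (𝒢.inv g) y x) :
    HEq (gd.b.act g (gd.φ (𝒢.d g) f)) (gd.φ (𝒢.r g) (a.act g f)) :=
  h.2.2.2.2.2.2.2.2.2.2.1 g y x f hf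

theorem ι_act₀_inv (h : IsGlobalization 𝒢 C a D gd) {g : G} {y : Ob} (hy : y ∈ a.D₀ g) :
    gd.ι (a.act₀ (𝒢.inv g) y) = gd.b.act₀ (𝒢.inv g) (gd.ι y) :=
  h.ι_act₀ (by rwa [𝒢.inv_inv'])

theorem act₀_ι_act₀_inv (h : IsGlobalization 𝒢 C a D gd) (hpa : IsSemicatPartialAction 𝒢 C a)
    {g : G} {y : Ob} (hy : y ∈ a.D₀ g) :
    gd.b.act₀ g (gd.ι (a.act₀ (𝒢.inv g) y)) = gd.ι y := by
  rw [← h.ι_act₀ (hpa.1.act_inv_mem hy), hpa.1.act_act_inv hy]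

theorem exists_act_φ_heq (h : IsGlobalization 𝒢 C a D gd) (hpa : IsSemicatPartialAction 𝒢 C a)
    {g : G} {y x : Ob} (hy : y ∈ a.D₀ g) (hx : x ∈ a.D₀ g) {f : C.Hom y x}
    (hf : f ∈ a.I g y x) :
    ∃ f₀ ∈ a.I (𝒢.inv g) (a.act₀ (𝒢.inv g) y) (a.act₀ (𝒢.inv g) x),
      HEq (gd.b.act g (gd.φ (𝒢.d g) f₀)) (gd.φ (𝒢.r g) f) := by
  obtain ⟨f₀, hf₀, hf₀f⟩ := hpa.exists_act_heq hy hx hf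
  exact ⟨f₀, hf₀, (h.act_φ_heq hf₀).trans
    (heq_hom_congr gd.ι (gd.φ (𝒢.r g)) (hpa.1.act_act_inv hy) (hpa.1.act_act_inv hx) hf₀f)⟩

theorem comp_φ_eq_of_heq_act_φ (h : IsGlobalization 𝒢 C a D gd)
    (hpa : IsSemicatPartialAction 𝒢 C a) {g : G} {x : Ob} (hx : x ∈ a.D₀ g)
    {e' : C.Hom (a.act₀ (𝒢.inv g) x) (a.act₀ (𝒢.inv g) x)}
    (he' : e' ∈ a.I (𝒢.d g) _ _) (he'_id : C.IsLocalIdentity (a.I (𝒢.d g)) _ e')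
    {E : D.Hom (gd.ι x) (gd.ι x)} (hE : HEq E (gd.b.act g (gd.φ (𝒢.d g) e')))
    {y : Ob} {f : C.Hom x y} (hf : f ∈ a.I g x y) :
    D.comp E (gd.φ (𝒢.r g) f) = gd.φ (𝒢.r g) f := by
  by_cases hy : y ∈ a.D₀ g
  · obtain ⟨f₀, hf₀, hf₀f⟩ := h.exists_act_φ_heq hpa hx hy hf
    have hf₀d := hpa.I_inv_le_I_d g _ _ hf₀
    have hdg := 𝒢.d_mem_units g
    have hβ : D.comp (gd.b.act g (gd.φ (𝒢.d g) e')) (gd.b.act g (gd.φ (𝒢.d g) f₀)) =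
        gd.b.act g (gd.φ (𝒢.d g) f₀) := by
      rw [← h.partialAction.act_comp (h.isGlobal.mem_I_inv_of_mem_I_d (h.φ_mem hdg he'))
        (h.isGlobal.mem_I_inv_of_mem_I_d (h.φ_mem hdg hf₀d)), ← h.φ_comp hdg he' hf₀d,
        he'_id.1 _ f₀ hf₀d]
    have hx' := h.act₀_ι_act₀_inv hpa hx
    have hy' := h.act₀_ι_act₀_inv hpa hy
    exact eq_of_heq (((D.comp_heq_comp hx'.symm hx'.symm hy'.symm hE hf₀f.symm).trans
      (heq_of_eq hβ)).trans hf₀f)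
  · rw [hpa.I_eq_bot (fun hyx => hy hyx.2), Submodule.mem_bot] at hf
    rw [hf, h.φ_zero (𝒢.r_mem_units g), D.comp_zero_right]

theorem φ_comp_eq_of_heq_act_φ (h : IsGlobalization 𝒢 C a D gd)
    (hpa : IsSemicatPartialAction 𝒢 C a) {g : G} {x : Ob} (hx : x ∈ a.D₀ g)
    {e' : C.Hom (a.act₀ (𝒢.inv g) x) (a.act₀ (𝒢.inv g) x)}
    (he' : e' ∈ a.I (𝒢.d g) _ _) (he'_id : C.IsLocalIdentity (a.I (𝒢.d g)) _ e')
    {E : D.Hom (gd.ι x) (gd.ι x)} (hE : HEq E (gd.b.act g (gd.φ (𝒢.d g) e')))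
    {y : Ob} {f : C.Hom y x} (hf : f ∈ a.I g y x) :
    D.comp (gd.φ (𝒢.r g) f) E = gd.φ (𝒢.r g) f := by
  by_cases hy : y ∈ a.D₀ g
  · obtain ⟨f₀, hf₀, hf₀f⟩ := h.exists_act_φ_heq hpa hy hx hf
    have hf₀d := hpa.I_inv_le_I_d g _ _ hf₀
    have hdg := 𝒢.d_mem_units g
    have hβ : D.comp (gd.b.act g (gd.φ (𝒢.d g) f₀)) (gd.b.act g (gd.φ (𝒢.d g) e')) =
        gd.b.act g (gd.φ (𝒢.d g) f₀) := by
      rw [← h.partialAction.act_comp (h.isGlobal.mem_I_inv_of_mem_I_d (h.φ_mem hdg hf₀d))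
        (h.isGlobal.mem_I_inv_of_mem_I_d (h.φ_mem hdg he')), ← h.φ_comp hdg hf₀d he',
        he'_id.2 _ f₀ hf₀d]
    have hx' := h.act₀_ι_act₀_inv hpa hx
    have hy' := h.act₀_ι_act₀_inv hpa hy
    exact eq_of_heq (((D.comp_heq_comp hy'.symm hx'.symm hx'.symm hf₀f.symm hE).trans
      (heq_of_eq hβ)).trans hf₀f)
  · rw [hpa.I_eq_bot (fun hyx => hy hyx.1), Submodule.mem_bot] at hf
    rw [hf, h.φ_zero (𝒢.r_mem_units g), D.comp_zero_left]

theorem exists_mem_I_φ_eq_comp (h : IsGlobalization 𝒢 C a D gd)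
    (hpa : IsSemicatPartialAction 𝒢 C a) {g : G} {x : Ob} (hx : x ∈ a.D₀ g)
    {e : C.Hom x x} (he : e ∈ a.I (𝒢.r g) x x)
    {e' : C.Hom (a.act₀ (𝒢.inv g) x) (a.act₀ (𝒢.inv g) x)} (he' : e' ∈ a.I (𝒢.d g) _ _)
    {E : D.Hom (gd.ι x) (gd.ι x)} (hE : HEq E (gd.b.act g (gd.φ (𝒢.d g) e'))) :
    ∃ u ∈ a.I g x x, gd.φ (𝒢.r g) u = D.comp E (gd.φ (𝒢.r g) e) := by
  have hb := h.partialAction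
  have hrg := 𝒢.r_mem_units g
  have hdg := 𝒢.d_mem_units g
  have hx' := h.act₀_ι_act₀_inv hpa hx
  have hx'' := h.ι_act₀_inv hx
  have hφe' := h.isGlobal.mem_I_inv_of_mem_I_d (h.φ_mem hdg he')
  have hφe : gd.φ (𝒢.r g) e ∈ gd.b.I (𝒢.inv (𝒢.inv g)) (gd.ι x) (gd.ι x) :=
    h.isGlobal.mem_I_inv_of_mem_I_d (by rw [𝒢.d_inv]; exact h.φ_mem hrg he)
  have hEg : E ∈ gd.b.I g (gd.ι x) (gd.ι x) :=
    (D.mem_iff_of_heq _ hx' hx' hE.symm).mp (hb.act_mem hφe')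
  obtain ⟨F, hF⟩ : ∃ F : D.Hom (gd.ι (a.act₀ (𝒢.inv g) x)) (gd.ι (a.act₀ (𝒢.inv g) x)),
      HEq F (gd.b.act (𝒢.inv g) (gd.φ (𝒢.r g) e)) :=
    ⟨cast (congrArg₂ D.Hom hx'' hx'').symm _, cast_heq _ _⟩
  have hF_inv : F ∈ gd.b.I (𝒢.inv g) _ _ :=
    (D.mem_iff_of_heq _ hx''.symm hx''.symm hF.symm).mp (hb.act_mem hφe)
  have hβF : HEq (gd.b.act g F) (gd.φ (𝒢.r g) e) :=
    (heq_hom_congr (gd.b.act₀ g) (gd.b.act g) hx'' hx'' hF).trans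
      (hb.act_act_inv_heq (by rwa [𝒢.inv_inv'] at hφe))
  obtain ⟨f', hf', hf'F⟩ := h.exists_φ_eq_comp_right hdg he' (hb.I_inv_le_I_d g _ _ hF_inv)
  refine h.exists_mem_I_of_exists_act hx hx
    (h.exists_φ_eq_comp_left hrg (hb.I_le_I_r g _ _ hEg) he) ⟨f', hf', ?_⟩
  rw [hf'F, hb.act_comp hφe' hF_inv]
  exact D.comp_heq_comp hx' hx' hx' hE.symm hβF

theorem isLocalIdentity_of_φ_eq_comp (h : IsGlobalization 𝒢 C a D gd)
    (hpa : IsSemicatPartialAction 𝒢 C a) {g : G} {x : Ob} (hx : x ∈ a.D₀ g)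
    {e : C.Hom x x} (he : e ∈ a.I (𝒢.r g) x x) (he_id : C.IsLocalIdentity (a.I (𝒢.r g)) x e)
    {e' : C.Hom (a.act₀ (𝒢.inv g) x) (a.act₀ (𝒢.inv g) x)}
    (he' : e' ∈ a.I (𝒢.d g) _ _) (he'_id : C.IsLocalIdentity (a.I (𝒢.d g)) _ e')
    {E : D.Hom (gd.ι x) (gd.ι x)} (hE : HEq E (gd.b.act g (gd.φ (𝒢.d g) e')))
    {u : C.Hom x x} (hu : u ∈ a.I g x x) (hφu : gd.φ (𝒢.r g) u = D.comp E (gd.φ (𝒢.r g) e)) :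
    C.IsLocalIdentity (a.I g) x u := by
  have hrg := 𝒢.r_mem_units g
  have hu' := hpa.I_le_I_r g x x hu
  refine ⟨fun y f hf => ?_, fun y f hf => ?_⟩
  · have hf' := hpa.I_le_I_r g x y hf
    refine h.φ_injective hrg (hpa.comp_mem_I_r u hf') hf' ?_
    rw [h.φ_comp hrg hu' hf', hφu, D.comp_assoc, ← h.φ_comp hrg he hf', he_id.1 y f hf',
      h.comp_φ_eq_of_heq_act_φ hpa hx he' he'_id hE hf]
  · have hf' := hpa.I_le_I_r g y x hf
    refine h.φ_injective hrg (hpa.mem_I_r_comp u hf') hf' ?_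
    rw [h.φ_comp hrg hf' hu', hφu, ← D.comp_assoc,
      h.φ_comp_eq_of_heq_act_φ hpa hx he' he'_id hE hf, ← h.φ_comp hrg hf' he, he_id.2 y f hf']

end IsGlobalization

end Globalization

/-- (Necessity in the globalization theorem.) Let `α` be a
partial action of a groupoid `𝒢` on an `R`-semicategory `C` such that
`_xI^e_x` contains an identity element for all `x ∈ C₀`, `e ∈ 𝒢₀`. If
`(C, α)` admits a globalization, then for every morphism `g` and every
object `x`, the `R`-module `_xI^g_x` contains a local identity element. -/
theorem stmt6 {R : Type u} [CommRing R] {G : Type u₂} {Ob : Type v} {Ob' : Type v'}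
    (𝒢 : AlgGroupoid G) (C : RSemicat.{u, v, w} R Ob) (a : SemicatActionData R G C)
    (hpa : IsSemicatPartialAction 𝒢 C a)
    (hid : ∀ e ∈ 𝒢.units, ∀ x : Ob, ∃ u ∈ a.I e x x, C.IsLocalIdentity (a.I e) x u)
    (D : RSemicat.{u, v', w'} R Ob') (gd : GlobalizationData R G C D)
    (hg : IsGlobalization 𝒢 C a D gd) :
    ∀ (g : G) (x : Ob), ∃ u ∈ a.I g x x, C.IsLocalIdentity (a.I g) x u := by
  intro g x
  by_cases hx : x ∈ a.D₀ g
  · obtain ⟨e, he, he_id⟩ := hid (𝒢.r g) (𝒢.r_mem_units g) x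
    obtain ⟨e', he', he'_id⟩ := hid (𝒢.d g) (𝒢.d_mem_units g) (a.act₀ (𝒢.inv g) x)
    have hx' := hg.act₀_ι_act₀_inv hpa hx
    obtain ⟨E, hE⟩ : ∃ E : D.Hom (gd.ι x) (gd.ι x), HEq E (gd.b.act g (gd.φ (𝒢.d g) e')) :=
      ⟨cast (congrArg₂ D.Hom hx' hx') _, cast_heq _ _⟩
    obtain ⟨u, hu, hφu⟩ := hg.exists_mem_I_φ_eq_comp hpa hx he he' hE
    exact ⟨u, hu, hg.isLocalIdentity_of_φ_eq_comp hpa hx he he_id he' he'_id hE hu hφu⟩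
  · exact ⟨0, zero_mem _, C.isLocalIdentity_zero (fun _ => hpa.I_eq_bot (fun hxy => hx hxy.1))
      (fun _ => hpa.I_eq_bot (fun hxy => hx hxy.2))⟩
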